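/- arXiv:1703.04346 — 2 statements merged into one kernel-verified Lean document; each statement's English description precedes it below -/
import Mathlib

section
/- Let q be a prime power with q > 2 and let C be an [n,k,d] linear code over F_{q²}. Then there exists a = (a_1,…,a_n) ∈ F_{q²}^n with a_j ≠ 0 for every 1 ≤ j ≤ n such that the code C_a is a Hermitian LCD code (hence C is equivalent to a Hermitian LCD code). -/
/-!
Let `G` be a generator matrix of `C` and `φ x = x ^ q`. Scaling by `a` turns the Hermitian Gram
matrix `G * (G.map φ)ᵀ` into `G * diagonal λ * (G.map φ)ᵀ` with `λ t = a t ^ (q + 1)`, and `C_a`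
is Hermitian LCD as soon as this matrix is invertible. As a function of `λ`, its determinant is
affine in each coordinate along lines through a non-root (matrix determinant lemma), and it has a
non-root (the indicator of an information set). Hence it has a non-root with all coordinates in
any set with two elements, such as the norms `x ^ (q + 1)`, `x ≠ 0`, when `q > 2`.
-/

open Matrix

/-- The Hermitian dual of a linear code over `F_{q²}`, where conjugation is
`x ↦ x ^ q`. -/
def hdualCode {F : Type*} [Field F] (q : ℕ) {ι : Type*} [Fintype ι]
    (C : Submodule F (ι → F)) : Submodule F (ι → F) where
  carrier := {b | ∀ c ∈ C, b ⬝ᵥ (fun i => (c i) ^ q) = 0}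
  add_mem' := by
    intro a b ha hb c hc
    simp [add_dotProduct, ha c hc, hb c hc]
  zero_mem' := by
    intro c hc
    simp
  smul_mem' := by
    intro r a ha c hc
    simp [smul_dotProduct, ha c hc]

/-- The minimum (Hamming) distance of a linear code. -/
noncomputable def minDist {F : Type*} [Field F] [DecidableEq F] {ι : Type*} [Fintype ι]
    (C : Submodule F (ι → F)) : ℕ :=
  sInf {w | ∃ c ∈ C, c ≠ 0 ∧ hammingNorm c = w}

/-- The linear map `(c_1, …, c_n) ↦ (a_1 c_1, …, a_n c_n)`; its image of a code
`C` is the code `C_a`. -/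
def scaleMap {F : Type*} [Field F] {n : ℕ} (a : Fin n → F) :
    (Fin n → F) →ₗ[F] (Fin n → F) :=
  LinearMap.pi fun i => a i • LinearMap.proj i

lemma FiniteField.exists_ringHom_eq_pow_of_dvd_card {K : Type*} [Field K] [Fintype K] {q : ℕ}
    (hq : q ∣ Fintype.card K) : ∃ φ : K →+* K, ∀ x, φ x = x ^ q := by
  obtain ⟨p, hchar, N, hp, hcard⟩ := FiniteField.card' K
  obtain ⟨m, -, rfl⟩ := (Nat.dvd_prime_pow hp).1 (hcard ▸ hq)
  have := Fact.mk hp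
  exact ⟨iterateFrobenius K p m, iterateFrobenius_def (R := K) p m⟩

lemma FiniteField.exists_unit_pow_ne_one {K : Type*} [Field K] [Fintype K] {e : ℕ}
    (he₀ : e ≠ 0) (he : e < Fintype.card K - 1) : ∃ u : Kˣ, u ^ e ≠ 1 := by
  classical
  have := NeZero.mk he₀
  by_contra! h
  have hle : Nat.card Kˣ ≤ Nat.card (rootsOfUnity e K) :=
    Nat.card_le_card_of_injective (fun u => ⟨u, (mem_rootsOfUnity e u).2 (h u)⟩)
      fun u v huv => congrArg Subtype.val huv
  have := card_rootsOfUnity K e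
  rw [Nat.card_eq_fintype_card, Fintype.card_units] at hle
  omega

lemma exists_forall_mem_ne_zero_of_affine_update {ι K : Type*} [Fintype ι] [DecidableEq ι]
    [Field K] {f : (ι → K) → K}
    (hf : ∀ lam, f lam ≠ 0 → ∀ t, ∃ w, ∀ x,
      f (Function.update lam t x) = f lam * (1 + (x - lam t) * w))
    {S : Set K} {s₁ s₂ : K} (hs₁ : s₁ ∈ S) (hs₂ : s₂ ∈ S) (hs : s₁ ≠ s₂)
    {μ : ι → K} (hμ : f μ ≠ 0) :
    ∃ lam : ι → K, (∀ t, lam t ∈ S) ∧ f lam ≠ 0 := by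
  suffices ∀ T : Finset ι, ∃ lam, (∀ t ∈ T, lam t ∈ S) ∧ f lam ≠ 0 by
    obtain ⟨lam, hS, hlam⟩ := this Finset.univ
    exact ⟨lam, fun t => hS t (Finset.mem_univ t), hlam⟩
  intro T
  induction T using Finset.induction_on with
  | empty => exact ⟨μ, by simp, hμ⟩
  | @insert t T htT ih =>
    obtain ⟨lam, hS, hlam⟩ := ih
    obtain ⟨w, hw⟩ := hf lam hlam t
    obtain ⟨s, hsS, hs⟩ : ∃ s ∈ S, 1 + (s - lam t) * w ≠ 0 := by
      by_contra! h
      have h₁ := h s₁ hs₁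
      have hw0 : w = 0 := by
        have : (s₁ - s₂) * w = 0 := by linear_combination h₁ - h s₂ hs₂
        exact (mul_eq_zero.1 this).resolve_left (sub_ne_zero.2 hs)
      simp [hw0] at h₁
    refine ⟨Function.update lam t s, fun t' ht' => ?_, by rw [hw]; exact mul_ne_zero hlam hs⟩
    rcases eq_or_ne t' t with rfl | hne
    · simpa using hsS
    · rw [Function.update_of_ne hne]
      exact hS t' ((Finset.mem_insert.1 ht').resolve_left hne)

lemma exists_isUnit_submatrix_of_linearIndependent {K κ ι : Type*} [Field K] [Fintype κ]
    [DecidableEq κ] [Fintype ι] {G : Matrix κ ι K} (hG : LinearIndependent K G.row) :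
    ∃ σ : κ → ι, Function.Injective σ ∧ IsUnit (G.submatrix id σ) := by
  have hspan : Submodule.span K (Set.range G.col) = ⊤ := by
    apply Submodule.eq_top_of_finrank_eq
    rw [← rank_eq_finrank_span_cols, hG.rank_matrix, Module.finrank_fintype_fun_eq_card]
  obtain ⟨ν, a, ha, hsp, hli⟩ := exists_linearIndependent' K G.col
  let b := Module.Basis.mk hli (by rw [hsp, hspan])
  let e := b.indexEquiv (Pi.basisFun K κ)
  refine ⟨a ∘ e.symm, ha.comp e.symm.injective, ?_⟩
  rw [← linearIndependent_cols_iff_isUnit]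
  exact hli.comp e.symm e.symm.injective

section WeightedGram

variable {K κ ι : Type*} [Field K] [Fintype ι] [DecidableEq ι]

lemma mul_diagonal_mul_transpose_apply (G H : Matrix κ ι K) (μ : ι → K) (i j : κ) :
    (G * diagonal μ * Hᵀ) i j = ∑ t, μ t * (G i t * H j t) := by
  rw [mul_apply]
  exact Finset.sum_congr rfl fun t _ => by rw [mul_diagonal, transpose_apply]; ring

lemma mul_diagonal_update_mul_transpose (G H : Matrix κ ι K) (lam : ι → K) (t : ι) (x : K) :
    G * diagonal (Function.update lam t x) * Hᵀ =
      G * diagonal lam * Hᵀ + vecMulVec ((x - lam t) • G.col t) (H.col t) := by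
  ext i j
  simp only [mul_diagonal_mul_transpose_apply, Matrix.add_apply, vecMulVec_apply]
  rw [← Finset.add_sum_erase _ _ (Finset.mem_univ t), ← Finset.add_sum_erase _ _ (Finset.mem_univ t),
    Finset.sum_congr rfl fun s hs => by rw [Function.update_of_ne (Finset.ne_of_mem_erase hs)]]
  simp only [Function.update_self, col_apply, Pi.smul_apply, smul_eq_mul]
  ring

lemma exists_det_mul_diagonal_update_mul_transpose [Fintype κ] [DecidableEq κ]
    (G H : Matrix κ ι K) (lam : ι → K) (h : (G * diagonal lam * Hᵀ).det ≠ 0) (t : ι) :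
    ∃ w : K, ∀ x, (G * diagonal (Function.update lam t x) * Hᵀ).det =
      (G * diagonal lam * Hᵀ).det * (1 + (x - lam t) * w) := by
  refine ⟨(H.col t ᵥ* (G * diagonal lam * Hᵀ)⁻¹) ⬝ᵥ G.col t, fun x => ?_⟩
  rw [mul_diagonal_update_mul_transpose, vecMulVec_eq Unit,
    det_add_replicateCol_mul_replicateRow h.isUnit, ← replicateRow_vecMul,
    det_unique (1 + _ : Matrix Unit Unit K)]
  simp

lemma exists_det_mul_diagonal_mul_map_transpose_ne_zero [Fintype κ] [DecidableEq κ]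
    (φ : K →+* K) {G : Matrix κ ι K} (hG : LinearIndependent K G.row) :
    ∃ μ : ι → K, (G * diagonal μ * (G.map φ)ᵀ).det ≠ 0 := by
  obtain ⟨σ, hσ, hP⟩ := exists_isUnit_submatrix_of_linearIndependent hG
  set P := G.submatrix id σ
  set μ : ι → K := (Set.range σ).indicator 1
  have hM : G * diagonal μ * (G.map φ)ᵀ = P * (P.map φ)ᵀ := by
    ext i j
    rw [mul_diagonal_mul_transpose_apply, mul_apply,
      ← Finset.sum_subset (Finset.subset_univ (Finset.univ.image σ))]
    · simp [μ, P, Finset.sum_image hσ.injOn]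
    · simp +contextual [μ]
  have hPd : P.det ≠ 0 := ((isUnit_iff_isUnit_det P).mp hP).ne_zero
  refine ⟨μ, ?_⟩
  rw [hM, det_mul, det_transpose, ← RingHom.mapMatrix_apply, ← RingHom.map_det]
  exact mul_ne_zero hPd ((map_ne_zero φ).2 hPd)

lemma mul_diagonal_mul_map_transpose {q : ℕ} {φ : K →+* K} (hφ : ∀ x, φ x = x ^ q)
    (G : Matrix κ ι K) (a : ι → K) :
    G * diagonal a * ((G * diagonal a).map φ)ᵀ =
      G * diagonal (fun t => a t ^ (q + 1)) * (G.map φ)ᵀ := by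
  rw [Matrix.map_mul (f := φ), diagonal_map (map_zero φ), transpose_mul, diagonal_transpose,
    Matrix.mul_assoc, ← Matrix.mul_assoc (diagonal a), diagonal_mul_diagonal, ← Matrix.mul_assoc]
  congr 3
  ext t
  rw [hφ, pow_succ']

end WeightedGram

lemma span_rows_inf_hdualCode_eq_bot {K κ ι : Type*} [Field K] [Fintype κ] [DecidableEq κ]
    [Fintype ι] {q : ℕ} {φ : K →+* K} (hφ : ∀ x, φ x = x ^ q) (G : Matrix κ ι K)
    (hG : IsUnit (G * (G.map φ)ᵀ)) :
    Submodule.span K (Set.range G.row) ⊓ hdualCode q (Submodule.span K (Set.range G.row)) = ⊥ := by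
  rw [eq_bot_iff]
  rintro x ⟨hxC, hxD⟩
  rw [← range_vecMulLinear] at hxC
  obtain ⟨y, rfl⟩ := hxC
  have hy : y ᵥ* (G * (G.map φ)ᵀ) = 0 := by
    ext j
    have := hxD (G j) (Submodule.subset_span ⟨j, rfl⟩)
    simp only [vecMulLinear_apply, ← vecMul_vecMul, vecMul_transpose, mulVec, map_apply, hφ]
      at this ⊢
    rw [dotProduct_comm]
    exact this
  obtain rfl : y = 0 := vecMul_injective_iff_isUnit.2 hG (hy.trans (zero_vecMul _).symm)
  simp

lemma scaleMap_apply {K : Type*} [Field K] {n : ℕ} (a x : Fin n → K) (t : Fin n) :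
    scaleMap a x t = a t * x t := by
  simp [scaleMap]

lemma map_scaleMap_span_rows {K κ : Type*} [Field K] {n : ℕ} (a : Fin n → K)
    (G : Matrix κ (Fin n) K) :
    (Submodule.span K (Set.range G.row)).map (scaleMap a) =
      Submodule.span K (Set.range (G * diagonal a).row) := by
  rw [Submodule.map_span, ← Set.range_comp]
  congr 2
  ext i t
  simp [scaleMap_apply, mul_comm]

lemma Submodule.span_range_coe_basis {K V : Type*} [Field K] [AddCommGroup V] [Module K V]
    {κ : Type*} {C : Submodule K V} (b : Module.Basis κ K C) :
    Submodule.span K (Set.range fun i => (b i : V)) = C := by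
  change Submodule.span K (Set.range (C.subtype ∘ b)) = C
  rw [Set.range_comp, ← Submodule.map_span, b.span_eq, Submodule.map_top, Submodule.range_subtype]

theorem exists_equivalent_hermitian_lcd_general
    (q : ℕ) (hq2 : 2 < q)
    {F : Type*} [Field F] [Fintype F] (hcard : Fintype.card F = q ^ 2)
    {n : ℕ}
    (C : Submodule F (Fin n → F)) :
    ∃ a : Fin n → F, (∀ j : Fin n, a j ≠ 0) ∧
      (Submodule.map (scaleMap a) C) ⊓ hdualCode q (Submodule.map (scaleMap a) C) = ⊥ := by
  obtain ⟨φ, hφ⟩ :=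
    FiniteField.exists_ringHom_eq_pow_of_dvd_card (hcard ▸ dvd_pow_self q two_ne_zero)
  have hlt : q + 1 < Fintype.card F - 1 := by
    rw [hcard]
    have : q + 2 < q ^ 2 := by nlinarith
    omega
  obtain ⟨u, hu⟩ := FiniteField.exists_unit_pow_ne_one q.add_one_ne_zero hlt
  let b := Module.finBasis F C
  let G : Matrix (Fin (Module.finrank F C)) (Fin n) F := Matrix.of fun i => (b i : Fin n → F)
  have hG : LinearIndependent F G.row := b.linearIndependent.map' C.subtype C.ker_subtype
  obtain ⟨μ, hμ⟩ := exists_det_mul_diagonal_mul_map_transpose_ne_zero φ hG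
  obtain ⟨lam, hlam, hdet⟩ := exists_forall_mem_ne_zero_of_affine_update
    (f := fun lam : Fin n → F => (G * diagonal lam * (G.map φ)ᵀ).det)
    (exists_det_mul_diagonal_update_mul_transpose G (G.map φ))
    (S := Set.range fun v : Fˣ => (v : F) ^ (q + 1)) (s₁ := 1) ⟨1, by simp⟩ ⟨u, rfl⟩
    (fun h => hu (Units.ext (by simpa using h.symm))) hμ
  choose a ha using hlam
  refine ⟨fun t => a t, fun t => (a t).ne_zero, ?_⟩
  have hC : Submodule.span F (Set.range G.row) = C := Submodule.span_range_coe_basis b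
  rw [← hC, map_scaleMap_span_rows]
  apply span_rows_inf_hdualCode_eq_bot hφ
  rw [isUnit_iff_isUnit_det, mul_diagonal_mul_map_transpose hφ]
  simpa [ha] using hdet.isUnit

/-- Let `q > 2` be a prime power and `C` an `[n,k,d]` linear code over
`F_{q²}`.  Then there exists `a ∈ F_{q²}^n` with all `a_j ≠ 0` such that `C_a`
is a Hermitian LCD code; hence `C` is equivalent to a Hermitian LCD code. -/
theorem exists_equivalent_hermitian_lcd
    (q : ℕ) (hq : ∃ p m : ℕ, p.Prime ∧ 0 < m ∧ q = p ^ m) (hq2 : 2 < q)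
    {F : Type*} [Field F] [Fintype F] [DecidableEq F] (hcard : Fintype.card F = q ^ 2)
    {n k d : ℕ}
    (C : Submodule F (Fin n → F))
    (hdim : Module.finrank F C = k) (hd : minDist C = d) :
    ∃ a : Fin n → F, (∀ j : Fin n, a j ≠ 0) ∧
      (Submodule.map (scaleMap a) C) ⊓ hdualCode q (Submodule.map (scaleMap a) C) = ⊥ :=
  exists_equivalent_hermitian_lcd_general q hq2 hcard C
end

section
/- Let q be a prime power with q > 2. Then α_{q²}^H(δ) = α_{q²}^lin(δ) for every δ ∈ [0,1]; that is, the largest asymptotic information rate achievable by Hermitian LCD codes over F_{q²} at asymptotic relative minimum distance δ equals that achievable by arbitrary linear codes over F_{q²}. -/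
/-!
Scaling the coordinates of a code by nonzero constants `a i` preserves its dimension and minimum
distance, and the scaled code is Hermitian LCD as soon as its Hermitian Gram matrix
`G diag(t) σ(G)ᵀ`, with `t i = a i ^ (q + 1)` and `G` a generator matrix, is nonsingular. This
determinant is affine in each `t i` and is nonzero when `t` is the indicator of an information
set, so it cannot vanish on the whole grid `Tⁿ`, where `T` is the set of norms `a ^ (q + 1)`,
`a ≠ 0`. `T` contains `1` and, for `q > 2`, another element, since `q² - 1 ∤ q + 1`. Hence
every linear code over `F_{q²}` has a Hermitian LCD twin with the same parameters.
-/

open Matrix Filter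

/-- `ULin F` is the set of pairs `(δ, R) ∈ [0,1]²` for which there is a
sequence of `[nᵢ, kᵢ, dᵢ]` linear codes over `F` with `nᵢ → ∞`,
`dᵢ/nᵢ → δ` and `kᵢ/nᵢ → R`. -/
def ULin (F : Type*) [Field F] [Fintype F] [DecidableEq F] : Set (ℝ × ℝ) :=
  {p | p ∈ Set.Icc (0 : ℝ) 1 ×ˢ Set.Icc (0 : ℝ) 1 ∧
    ∃ (nn kk dd : ℕ → ℕ) (C : (i : ℕ) → Submodule F (Fin (nn i) → F)),
      (∀ i, Module.finrank F (C i) = kk i) ∧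
      (∀ i, minDist (C i) = dd i) ∧
      Tendsto nn atTop atTop ∧
      Tendsto (fun i => (dd i : ℝ) / (nn i : ℝ)) atTop (nhds p.1) ∧
      Tendsto (fun i => (kk i : ℝ) / (nn i : ℝ)) atTop (nhds p.2)}

/-- `UH q F` is the analogous set where all codes in the sequence are required
to be Hermitian LCD codes (conjugation being `x ↦ x ^ q` on `F = F_{q²}`). -/
def UH (q : ℕ) (F : Type*) [Field F] [Fintype F] [DecidableEq F] : Set (ℝ × ℝ) :=
  {p | p ∈ Set.Icc (0 : ℝ) 1 ×ˢ Set.Icc (0 : ℝ) 1 ∧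
    ∃ (nn kk dd : ℕ → ℕ) (C : (i : ℕ) → Submodule F (Fin (nn i) → F)),
      (∀ i, Module.finrank F (C i) = kk i) ∧
      (∀ i, minDist (C i) = dd i) ∧
      (∀ i, C i ⊓ hdualCode q (C i) = ⊥) ∧
      Tendsto nn atTop atTop ∧
      Tendsto (fun i => (dd i : ℝ) / (nn i : ℝ)) atTop (nhds p.1) ∧
      Tendsto (fun i => (kk i : ℝ) / (nn i : ℝ)) atTop (nhds p.2)}

/-- `α_{q²}^lin(δ)`: the largest asymptotic information rate of linear codes
over `F = F_{q²}` at asymptotic relative minimum distance `δ`. -/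
noncomputable def alphaLin (F : Type*) [Field F] [Fintype F] [DecidableEq F]
    (δ : ℝ) : ℝ :=
  sSup {R : ℝ | R ∈ Set.Icc (0 : ℝ) 1 ∧ (δ, R) ∈ ULin F}

/-- `α_{q²}^H(δ)`: the largest asymptotic information rate of Hermitian LCD
codes over `F = F_{q²}` at asymptotic relative minimum distance `δ`. -/
noncomputable def alphaH (q : ℕ) (F : Type*) [Field F] [Fintype F] [DecidableEq F]
    (δ : ℝ) : ℝ :=
  sSup {R : ℝ | R ∈ Set.Icc (0 : ℝ) 1 ∧ (δ, R) ∈ UH q F}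

def IsMultiaffine {ι R : Type*} [DecidableEq ι] [Mul R] [Add R] (f : (ι → R) → R) : Prop :=
  ∀ (i : ι) (t : ι → R), ∃ a b : R, ∀ x : R, f (Function.update t i x) = a + b * x

theorem IsMultiaffine.eq_zero_of_forall_mem_pi {ι R : Type*} [Fintype ι] [DecidableEq ι]
    [CommRing R] [NoZeroDivisors R] {f : (ι → R) → R} (hf : IsMultiaffine f) {T : Set R}
    {x y : R} (hx : x ∈ T) (hy : y ∈ T) (hxy : x ≠ y) (h0 : ∀ t, (∀ i, t i ∈ T) → f t = 0)
    (t : ι → R) : f t = 0 := by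
  suffices h : ∀ s : Finset ι, ∀ t : ι → R, (∀ i ∉ s, t i ∈ T) → f t = 0 from
    h Finset.univ t (by simp)
  intro s
  induction s using Finset.induction_on with
  | empty => exact fun t ht => h0 t fun i => ht i (Finset.notMem_empty i)
  | insert i s _ ih =>
    intro t ht
    obtain ⟨a, b, hab⟩ := hf i t
    have hT : ∀ z ∈ T, a + b * z = 0 := fun z hz => by
      rw [← hab]
      refine ih _ fun j hj => ?_
      rcases eq_or_ne j i with rfl | hji
      · simpa using hz
      · rw [Function.update_of_ne hji]
        exact ht j (by simp [hji, hj])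
    have hb : b = 0 := by
      have : b * (x - y) = 0 := by linear_combination hT x hx - hT y hy
      exact (mul_eq_zero.1 this).resolve_right (sub_ne_zero.2 hxy)
    have ha : a = 0 := by simpa [hb] using hT x hx
    rw [← Function.update_eq_self i t, hab, ha, hb, zero_mul, add_zero]

theorem Matrix.exists_det_add_smul_vecMulVec_eq {n R : Type*} [Fintype n] [DecidableEq n]
    [CommRing R] (M : Matrix n n R) (v w : n → R) :
    ∃ a b : R, ∀ x : R, (M + x • vecMulVec v w).det = a + b * x := by
  -- `M + x vwᵀ` is the Schur complement of the corner `1` in `[[1, -x wᵀ], [v, M]]`,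
  -- whose first row is affine in `x`.
  let N : Matrix (Unit ⊕ n) (Unit ⊕ n) R := fromBlocks 1 0 (replicateCol Unit v) M
  let r₀ : Unit ⊕ n → R := Sum.elim 1 0
  let r₁ : Unit ⊕ n → R := Sum.elim 0 (-w)
  refine ⟨(N.updateRow (Sum.inl ()) r₀).det, (N.updateRow (Sum.inl ()) r₁).det, fun x => ?_⟩
  have hblock : N.updateRow (Sum.inl ()) (r₀ + x • r₁) =
      fromBlocks 1 (replicateRow Unit (-(x • w))) (replicateCol Unit v) M := by
    ext (i | i) (j | j) <;> simp [N, r₀, r₁, updateRow_apply]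
  have hschur : M + x • vecMulVec v w =
      M - replicateCol Unit v * replicateRow Unit (-(x • w)) := by
    rw [← vecMulVec_eq Unit, vecMulVec_neg, vecMulVec_smul, sub_neg_eq_add]
  rw [hschur, ← det_fromBlocks_one₁₁, ← hblock, det_updateRow_add, det_updateRow_smul, mul_comm]

theorem Matrix.exists_injective_det_submatrix_ne_zero {F ι : Type*} [Field F] [Fintype ι]
    {k : ℕ} (G : Matrix (Fin k) ι F) (hG : LinearIndependent F G.row) :
    ∃ e : Fin k → ι, Function.Injective e ∧ (G.submatrix id e).det ≠ 0 := by
  have hspan : Submodule.span F (Set.range G.col) = ⊤ := Submodule.eq_top_of_finrank_eq <| by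
    rw [← rank_eq_finrank_span_cols, hG.rank_matrix, Module.finrank_fin_fun, Fintype.card_fin]
  obtain ⟨κ, a, ha, hspan', hli⟩ := exists_linearIndependent' F G.col
  have : Fintype κ := have := Finite.of_injective a ha; Fintype.ofFinite κ
  have hcard : Fintype.card κ = k := by
    rw [linearIndependent_iff_card_eq_finrank_span.1 hli, Set.finrank, hspan', hspan,
      finrank_top, Module.finrank_fin_fun]
  let e := (Fintype.equivFinOfCardEq hcard).symm
  refine ⟨a ∘ e, ha.comp e.injective, ?_⟩
  rw [← isUnit_iff_ne_zero, ← isUnit_iff_isUnit_det, ← linearIndependent_cols_iff_isUnit]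
  exact hli.comp e e.injective

section

variable {F ι κ : Type*} [Field F] [Fintype ι] [DecidableEq ι]

def hermitianGram (σ : F →+* F) (G : Matrix κ ι F) (t : ι → F) : Matrix κ κ F :=
  G * diagonal t * (G.map σ)ᵀ

theorem hermitianGram_update (σ : F →+* F) (G : Matrix κ ι F) (t : ι → F) (i : ι) (x : F) :
    hermitianGram σ G (Function.update t i x) =
      hermitianGram σ G (Function.update t i 0) + x • vecMulVec (G.col i) (σ ∘ G.col i) := by
  have hsplit : Function.update t i x = Function.update t i 0 + Pi.single i x := by
    ext m; rcases eq_or_ne m i with rfl | hm <;> simp [*]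
  rw [hermitianGram, hsplit, ← (diagonal_add _ _ : diagonal _ + diagonal _ = diagonal (_ + _)),
    Matrix.mul_add, Matrix.add_mul]
  congr 1
  ext j l
  simp [mul_apply, diagonal_apply, vecMulVec_apply, Pi.single_apply, mul_comm, mul_assoc]

theorem isMultiaffine_det_hermitianGram [Fintype κ] [DecidableEq κ] (σ : F →+* F)
    (G : Matrix κ ι F) : IsMultiaffine fun t => (hermitianGram σ G t).det := by
  intro i t
  obtain ⟨a, b, hab⟩ := exists_det_add_smul_vecMulVec_eq
    (hermitianGram σ G (Function.update t i 0)) (G.col i) (σ ∘ G.col i)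
  exact ⟨a, b, fun x => (congrArg det (hermitianGram_update σ G t i x)).trans (hab x)⟩

theorem exists_det_hermitianGram_ne_zero (σ : F →+* F) {k : ℕ} (G : Matrix (Fin k) ι F)
    (hG : LinearIndependent F G.row) : ∃ t, (hermitianGram σ G t).det ≠ 0 := by
  obtain ⟨e, he, hdet⟩ := G.exists_injective_det_submatrix_ne_zero hG
  refine ⟨fun i => if i ∈ Finset.univ.map ⟨e, he⟩ then 1 else 0, ?_⟩
  have hgram : hermitianGram σ G (fun i => if i ∈ Finset.univ.map ⟨e, he⟩ then 1 else 0) =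
      G.submatrix id e * ((G.submatrix id e).map σ)ᵀ := by
    ext j l
    simp only [hermitianGram, Finset.mem_map, Finset.mem_univ, Function.Embedding.coeFn_mk,
      true_and, mul_apply, diagonal_apply, mul_ite, mul_one, mul_zero, Finset.sum_ite_eq',
      if_true, transpose_apply, map_apply, ite_mul, zero_mul, submatrix_apply, id_eq]
    rw [← Finset.sum_filter, ← Finset.sum_image (f := fun m => G j m * σ (G l m)) he.injOn]
    congr 1
    ext; simp
  rw [hgram, det_mul, det_transpose, ← RingHom.mapMatrix_apply, ← RingHom.map_det]
  exact mul_ne_zero hdet ((map_ne_zero σ).2 hdet)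

end

section

variable {F ι κ : Type*} [Field F]

def coordScaling (a : ι → Fˣ) : (ι → F) ≃ₗ[F] (ι → F) :=
  LinearEquiv.piCongrRight fun i => LinearEquiv.smulOfUnit (a i)

theorem coordScaling_apply (a : ι → Fˣ) (x : ι → F) (i : ι) :
    coordScaling a x i = a i * x i := rfl

variable [Fintype ι]

theorem hammingNorm_coordScaling [DecidableEq F] (a : ι → Fˣ) (x : ι → F) :
    hammingNorm (coordScaling a x) = hammingNorm x := by
  simp [hammingNorm, coordScaling_apply]

theorem minDist_map_of_hammingNorm [DecidableEq F] (φ : (ι → F) ≃ₗ[F] (ι → F))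
    (hφ : ∀ x, hammingNorm (φ x) = hammingNorm x) (C : Submodule F (ι → F)) :
    minDist (C.map (φ : (ι → F) →ₗ[F] (ι → F))) = minDist C := by
  unfold minDist
  congr 1
  ext w
  constructor
  · rintro ⟨_, ⟨c, hc, rfl⟩, hc0, rfl⟩
    exact ⟨c, hc, by simpa using hc0, (hφ c).symm⟩
  · rintro ⟨c, hc, hc0, rfl⟩
    exact ⟨φ c, Submodule.mem_map_of_mem hc, by simpa using hc0, hφ c⟩

theorem inf_hdualCode_eq_bot_of_det_ne_zero [Fintype κ] [DecidableEq κ] (q : ℕ)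
    (H : Matrix κ ι F) {D : Submodule F (ι → F)} (hD : Submodule.span F (Set.range H.row) = D)
    (hdet : (H * (H.map (· ^ q))ᵀ).det ≠ 0) : D ⊓ hdualCode q D = ⊥ := by
  rw [eq_bot_iff]
  intro x hx
  obtain ⟨hxD, hxdual⟩ := Submodule.mem_inf.1 hx
  rw [← hD, Submodule.mem_span_range_iff_exists_fun] at hxD
  obtain ⟨u, rfl⟩ := hxD
  have hu : u ᵥ* (H * (H.map (· ^ q))ᵀ) = 0 := by
    ext l
    rw [← vecMul_vecMul, vecMul_transpose, Pi.zero_apply, mulVec, dotProduct_comm, vecMul_eq_sum]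
    exact hxdual (H l) (hD ▸ Submodule.subset_span ⟨l, rfl⟩)
  have hu0 : u = 0 := by
    by_contra hne
    exact hdet (exists_vecMul_eq_zero_iff.1 ⟨u, hne, hu⟩)
  simp [hu0]

theorem exists_coordScaling_inf_hdualCode_eq_bot [DecidableEq ι] {q : ℕ} (σ : F →+* F)
    (hσ : ∀ x, σ x = x ^ q) (hnorm : ∃ c : Fˣ, (c : F) ^ (q + 1) ≠ 1) (C : Submodule F (ι → F)) :
    ∃ a : ι → Fˣ, C.map (coordScaling a : (ι → F) →ₗ[F] (ι → F)) ⊓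
      hdualCode q (C.map (coordScaling a : (ι → F) →ₗ[F] (ι → F))) = ⊥ := by
  obtain ⟨c, hc⟩ := hnorm
  let b := Module.finBasis F C
  let G : Matrix (Fin (Module.finrank F C)) ι F := .of fun j => (b j : ι → F)
  have hG : LinearIndependent F G.row := b.linearIndependent.map' C.subtype C.ker_subtype
  let T := Set.range fun u : Fˣ => (u : F) ^ (q + 1)
  obtain ⟨t, htT, ht⟩ : ∃ t : ι → F, (∀ i, t i ∈ T) ∧ (hermitianGram σ G t).det ≠ 0 := by
    by_contra! h
    obtain ⟨t₀, ht₀⟩ := exists_det_hermitianGram_ne_zero σ G hG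
    exact ht₀ ((isMultiaffine_det_hermitianGram σ G).eq_zero_of_forall_mem_pi
      (T := T) ⟨1, one_pow _⟩ ⟨c, rfl⟩ hc.symm h t₀)
  choose a ha using htT
  refine ⟨a, inf_hdualCode_eq_bot_of_det_ne_zero q (G * diagonal fun i => (a i : F)) ?_ ?_⟩
  · have hrow : (G * diagonal fun i => (a i : F)).row = coordScaling a ∘ G.row := by
      ext j i
      simp [coordScaling_apply, mul_comm]
    have hC : Submodule.span F (Set.range G.row) = C := by
      rw [show G.row = C.subtype ∘ b from rfl, Set.range_comp, Submodule.span_image, b.span_eq,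
        Submodule.map_top, Submodule.range_subtype]
    rw [hrow, Set.range_comp]
    conv_rhs => rw [← hC]
    exact (Submodule.map_span _ _).symm
  · convert ht using 2
    ext j l
    simp [hermitianGram, mul_apply, diagonal_apply, ← ha, mul_pow, hσ, pow_succ, mul_assoc,
      mul_comm, mul_left_comm]

theorem exists_hermitianLCD_finrank_eq_minDist_eq [DecidableEq ι] [DecidableEq F] {q : ℕ}
    (σ : F →+* F) (hσ : ∀ x, σ x = x ^ q) (hnorm : ∃ c : Fˣ, (c : F) ^ (q + 1) ≠ 1)
    (C : Submodule F (ι → F)) :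
    ∃ C' : Submodule F (ι → F), Module.finrank F C' = Module.finrank F C ∧
      minDist C' = minDist C ∧ C' ⊓ hdualCode q C' = ⊥ := by
  obtain ⟨a, ha⟩ := exists_coordScaling_inf_hdualCode_eq_bot σ hσ hnorm C
  exact ⟨_, (coordScaling a).finrank_map_eq C,
    minDist_map_of_hammingNorm _ (hammingNorm_coordScaling a) C, ha⟩

end

theorem UH_eq_ULin {F : Type*} [Field F] [Fintype F] [DecidableEq F] {q : ℕ} (σ : F →+* F)
    (hσ : ∀ x, σ x = x ^ q) (hnorm : ∃ c : Fˣ, (c : F) ^ (q + 1) ≠ 1) : UH q F = ULin F := by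
  ext p
  constructor
  · rintro ⟨hp, nn, kk, dd, C, hk, hd, -, hn, hδ, hR⟩
    exact ⟨hp, nn, kk, dd, C, hk, hd, hn, hδ, hR⟩
  · rintro ⟨hp, nn, kk, dd, C, hk, hd, hn, hδ, hR⟩
    choose C' hk' hd' hC' using fun i => exists_hermitianLCD_finrank_eq_minDist_eq σ hσ hnorm (C i)
    exact ⟨hp, nn, kk, dd, C', fun i => (hk' i).trans (hk i), fun i => (hd' i).trans (hd i), hC',
      hn, hδ, hR⟩

theorem FiniteField.exists_pow_ne_one_of_lt {K : Type*} [Field K] [Fintype K] {m : ℕ}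
    (hm0 : 0 < m) (hm : m < Fintype.card K - 1) : ∃ a : Kˣ, a ^ m ≠ 1 := by
  by_contra! h
  have := Nat.le_of_dvd hm0 ((FiniteField.forall_pow_eq_one_iff K m).1 h)
  omega

theorem alphaH_eq_alphaLin_general
    (q : ℕ) (hq : ∃ p m : ℕ, p.Prime ∧ 0 < m ∧ q = p ^ m) (hq2 : 2 < q)
    (F : Type*) [Field F] [Fintype F] [DecidableEq F] (hcard : Fintype.card F = q ^ 2)
    (δ : ℝ) :
    alphaH q F δ = alphaLin F δ := by
  obtain ⟨p, m, hp, -, rfl⟩ := hq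
  have : Fact p.Prime := ⟨hp⟩
  have : CharP F p := charP_of_card_eq_prime_pow (f := m * 2) (by rw [hcard, pow_mul])
  obtain ⟨c, hc⟩ : ∃ c : Fˣ, c ^ (p ^ m + 1) ≠ 1 := by
    refine FiniteField.exists_pow_ne_one_of_lt (by omega) ?_
    have : p ^ m + 3 ≤ (p ^ m) ^ 2 := by nlinarith
    omega
  rw [alphaH, alphaLin, UH_eq_ULin (iterateFrobenius F p m) (fun _ => iterateFrobenius_def ..)
    ⟨c, fun h => hc (Units.ext (by simpa using h))⟩]

/-- For a prime power `q > 2`, Hermitian LCD codes over `F_{q²}` achieve the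
same asymptotic rate/distance trade-off as arbitrary linear codes over
`F_{q²}`: `α_{q²}^H(δ) = α_{q²}^lin(δ)` for every `δ ∈ [0,1]`. -/
theorem alphaH_eq_alphaLin
    (q : ℕ) (hq : ∃ p m : ℕ, p.Prime ∧ 0 < m ∧ q = p ^ m) (hq2 : 2 < q)
    (F : Type*) [Field F] [Fintype F] [DecidableEq F] (hcard : Fintype.card F = q ^ 2)
    (δ : ℝ) (hδ : δ ∈ Set.Icc (0 : ℝ) 1) :
    alphaH q F δ = alphaLin F δ :=
  alphaH_eq_alphaLin_general q hq hq2 F hcard δ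
end
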